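/- Let Φ be a convex growth function and α > −1. For every z = x+iy ∈ ℂ₊, the function f_z(w) = Φ⁻¹(1/y^{2+α}) · y^{4+2α}/(w−z̄)^{4+2α} is holomorphic on ℂ₊ and satisfies ∫_{ℂ₊} Φ(|f_z(w)|) dV_α(w) ≤ B(1/2, (3+2α)/2) · B(1+α, 2+α), where B is the Beta function; in particular f_z belongs to A_α^Φ(ℂ₊) uniformly in z. -/

import Mathlib

open MeasureTheory Complex Set
open scoped ENNReal Real

noncomputable section

/-- The upper half-plane `ℂ₊`. -/
def UHP : Set ℂ := {z : ℂ | 0 < z.im}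

/-- A growth function: a continuous nondecreasing surjection from `[0, ∞)` onto itself. -/
def IsGrowth (Φ : ℝ → ℝ) : Prop :=
  ContinuousOn Φ (Ici 0) ∧ MonotoneOn Φ (Ici 0) ∧
    MapsTo Φ (Ici 0) (Ici 0) ∧ SurjOn Φ (Ici 0) (Ici 0)

/-- Generalized inverse `Φ⁻¹(s) = inf {t ≥ 0 : Φ t ≥ s}`. -/
def invF (Φ : ℝ → ℝ) (s : ℝ) : ℝ := sInf {t : ℝ | 0 ≤ t ∧ s ≤ Φ t}

/-- `Φ` is of upper type `q`. -/
def UpperType (Φ : ℝ → ℝ) (q : ℝ) : Prop :=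
  ∃ C > (0 : ℝ), ∀ s > (0 : ℝ), ∀ t ≥ (1 : ℝ), Φ (s * t) ≤ C * t ^ q * Φ s

/-- The class `𝒰`: growth functions of some upper type `q ≥ 1` with `t ↦ Φ t / t`
nondecreasing. -/
def ClassU (Φ : ℝ → ℝ) : Prop :=
  IsGrowth Φ ∧ ∃ q ≥ (1 : ℝ), UpperType Φ q ∧ MonotoneOn (fun t => Φ t / t) (Ioi 0)

/-- The class `𝒰̃`: members of `𝒰` of upper type `q` satisfying conditions (a1), (a2), (a3). -/
def ClassUt (Φ : ℝ → ℝ) : Prop :=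
  IsGrowth Φ ∧ ∃ q ≥ (1 : ℝ), UpperType Φ q ∧ MonotoneOn (fun t => Φ t / t) (Ioi 0) ∧
    (∃ C₁ > (0 : ℝ), ∀ s > (0 : ℝ), ∀ t > (0 : ℝ), Φ (s * t) ≤ C₁ * Φ s * Φ t) ∧
    (∃ C₂ > (0 : ℝ), ∀ a ≥ (1 : ℝ), ∀ b ≥ (1 : ℝ), Φ (a / b) ≤ C₂ * Φ a / b ^ q) ∧
    (∃ C₃ > (0 : ℝ), ∀ a b : ℝ, 0 < a → a ≤ b → b ≤ 1 → Φ (a / b) ≤ C₃ * Φ a / Φ b)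

/-- The `Δ₂`-condition. -/
def Delta2 (Φ : ℝ → ℝ) : Prop := ∃ K > (1 : ℝ), ∀ t ≥ (0 : ℝ), Φ (2 * t) ≤ K * Φ t

/-- The complementary function `Ψ(s) = sup_{t ≥ 0} (st - Φ t)`, valued in `ℝ≥0∞`. -/
def complementaryFn (Φ : ℝ → ℝ) (s : ℝ) : ℝ≥0∞ :=
  ⨆ (t : ℝ) (_ : 0 ≤ t), ENNReal.ofReal (s * t - Φ t)

/-- The `∇₂`-condition: both `Φ` and its complementary function satisfy `Δ₂`. -/
def Nabla2 (Φ : ℝ → ℝ) : Prop :=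
  Delta2 Φ ∧ ∃ K > (1 : ℝ), ∀ s ≥ (0 : ℝ),
    complementaryFn Φ (2 * s) ≤ ENNReal.ofReal K * complementaryFn Φ s

/-- The Carleson square over the interval `(a, b)`. -/
def carlesonSq (a b : ℝ) : Set ℂ := {z : ℂ | z.re ∈ Ioo a b ∧ z.im ∈ Ioo 0 (b - a)}

/-- The Luxembourg (quasi)-norm of `g` in `L^Φ(μ)`. -/
def luxNorm {X : Type*} [MeasurableSpace X] (Φ : ℝ → ℝ) (μ : Measure X) (g : X → ℂ) : ℝ≥0∞ :=
  ⨅ (l : ℝ) (_ : 0 < l ∧ ∫⁻ x, ENNReal.ofReal (Φ (‖g x‖ / l)) ∂μ ≤ 1),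
    ENNReal.ofReal l

/-- The Hardy–Orlicz (Luxembourg) norm `sup_{y > 0} ‖f(· + iy)‖_{L^Φ}^{lux}`. -/
def hardyNorm (Φ : ℝ → ℝ) (f : ℂ → ℂ) : ℝ≥0∞ :=
  ⨆ (y : ℝ) (_ : 0 < y),
    luxNorm Φ (volume : Measure ℝ) (fun x => f ((x : ℂ) + (y : ℂ) * Complex.I))

/-- Membership in the Hardy–Orlicz space `H^Φ(ℂ₊)`. -/
def MemHardy (Φ : ℝ → ℝ) (f : ℂ → ℂ) : Prop :=
  DifferentiableOn ℂ f UHP ∧ hardyNorm Φ f < ⊤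

/-- The measure `dV_α = y^α dx dy` on the upper half-plane. -/
def bergMeasure (α : ℝ) : Measure ℂ :=
  ((volume : Measure ℂ).restrict UHP).withDensity fun z => ENNReal.ofReal (z.im ^ α)

/-- The Luxembourg (quasi)-norm of the Bergman–Orlicz space `A_α^Φ(ℂ₊)`. -/
def bergLux (Φ : ℝ → ℝ) (α : ℝ) (f : ℂ → ℂ) : ℝ≥0∞ := luxNorm Φ (bergMeasure α) f

/-- Membership in the Bergman–Orlicz space `A_α^Φ(ℂ₊)`. -/
def MemBergman (Φ : ℝ → ℝ) (α : ℝ) (f : ℂ → ℂ) : Prop :=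
  DifferentiableOn ℂ f UHP ∧
    ∫⁻ z, ENNReal.ofReal (Φ ‖f z‖) ∂(bergMeasure α) < ⊤

/-- `g` is a pointwise multiplier from `H^{Φ₁}(ℂ₊)` to `A_α^{Φ₂}(ℂ₊)`. -/
def MultHB (Φ₁ Φ₂ : ℝ → ℝ) (α : ℝ) (g : ℂ → ℂ) : Prop :=
  DifferentiableOn ℂ g UHP ∧
    ∃ C > (0 : ℝ), ∀ f : ℂ → ℂ, MemHardy Φ₁ f →
      bergLux Φ₂ α (fun z => f z * g z) ≤ ENNReal.ofReal C * hardyNorm Φ₁ f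

/-- `g` is a pointwise multiplier from `A_α^{Φ₁}(ℂ₊)` to `A_β^{Φ₂}(ℂ₊)`. -/
def MultBB (Φ₁ Φ₂ : ℝ → ℝ) (α β : ℝ) (g : ℂ → ℂ) : Prop :=
  DifferentiableOn ℂ g UHP ∧
    ∃ C > (0 : ℝ), ∀ f : ℂ → ℂ, MemBergman Φ₁ α f →
      bergLux Φ₂ β (fun z => f z * g z) ≤ ENNReal.ofReal C * bergLux Φ₁ α f

/-- Extension of a growth function to `ℝ≥0∞`. -/
def PhiE (Φ : ℝ → ℝ) (x : ℝ≥0∞) : ℝ≥0∞ :=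
  if x = ⊤ then ⊤ else ENNReal.ofReal (Φ x.toReal)

/-- The Hardy–Littlewood maximal function on `ℝ`. -/
def maximalR (f : ℝ → ℂ) (x : ℝ) : ℝ≥0∞ :=
  ⨆ (a : ℝ) (b : ℝ) (_ : a ≤ x ∧ x ≤ b ∧ a < b),
    (∫⁻ s in Ioo a b, (‖f s‖₊ : ℝ≥0∞)) / ENNReal.ofReal (b - a)

/-- The nontangential maximal function `f*` of `f : ℂ₊ → ℂ`. -/
def ntMax (f : ℂ → ℂ) (x : ℝ) : ℝ≥0∞ :=
  ⨆ (z : ℂ) (_ : 0 < z.im ∧ |z.re - x| < z.im), (‖f z‖₊ : ℝ≥0∞)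

/-- The Luxembourg norm of the nontangential maximal function `f*` in `L^Φ(ℝ)`. -/
def ntLux (Φ : ℝ → ℝ) (f : ℂ → ℂ) : ℝ≥0∞ :=
  ⨅ (l : ℝ) (_ : 0 < l ∧ ∫⁻ x, PhiE Φ (ntMax f x / ENNReal.ofReal l) ≤ 1), ENNReal.ofReal l

/-- The weighted Hardy–Littlewood maximal function `𝓜_α` on `ℂ₊`. -/
def maximalBerg (α : ℝ) (f : ℂ → ℂ) (z : ℂ) : ℝ≥0∞ :=
  ⨆ (a : ℝ) (b : ℝ) (_ : a < b ∧ z ∈ carlesonSq a b),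
    (∫⁻ w in carlesonSq a b, (‖f w‖₊ : ℝ≥0∞) ∂(bergMeasure α)) /
      bergMeasure α (carlesonSq a b)

/-- The function `Φ₃(t) = 1 / (Φ₂ ∘ Φ₁⁻¹)(1/t)` for `t > 0`, `Φ₃(0) = 0`. -/
def Phi3 (Φ₁ Φ₂ : ℝ → ℝ) (t : ℝ) : ℝ :=
  if t ≤ 0 then 0 else 1 / Φ₂ (invF Φ₁ (1 / t))

/-- The Beta function `B(m, n) = ∫₀^∞ u^{m-1}/(1+u)^{m+n} du`. -/
def betaFn (m n : ℝ) : ℝ := ∫ u in Ioi (0 : ℝ), u ^ (m - 1) / (1 + u) ^ (m + n)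


/-! ### Auxiliary lemmas -/

section Aux

theorem lintegral_image_eq_lintegral_abs_deriv_mul' {s : Set ℝ} {f : ℝ → ℝ} {f' : ℝ → ℝ}
    (hs : MeasurableSet s) (hf' : ∀ x ∈ s, HasDerivWithinAt f (f' x) s x)
    (hf : InjOn f s) (g : ℝ → ℝ≥0∞) :
    ∫⁻ x in f '' s, g x = ∫⁻ x in s, ENNReal.ofReal |f' x| * g (f x) := by
  simpa only [ContinuousLinearMap.det_toSpanSingleton] using
    lintegral_image_eq_lintegral_abs_det_fderiv_mul volume hs
      (fun x hx => (hf' x hx).hasFDerivWithinAt) hf g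

lemma growth_zero {Φ : ℝ → ℝ} (hg : IsGrowth Φ) : Φ 0 = 0 := by
  obtain ⟨t, ht, hΦt⟩ := hg.2.2.2 (mem_Ici.mpr (le_refl (0:ℝ)))
  have h0 : Φ 0 ≤ Φ t := hg.2.1 (mem_Ici.mpr (le_refl 0)) ht (ht : (0:ℝ) ≤ t)
  have h1 : (0:ℝ) ≤ Φ 0 := hg.2.2.1 (mem_Ici.mpr (le_refl 0))
  rw [hΦt] at h0; linarith

lemma invF_nonneg (Φ : ℝ → ℝ) (s : ℝ) : 0 ≤ invF Φ s :=
  Real.sInf_nonneg fun _ ht => ht.1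

lemma phi_invF_le {Φ : ℝ → ℝ} (hg : IsGrowth Φ) {s : ℝ} (hs : 0 ≤ s) :
    Φ (invF Φ s) ≤ s := by
  obtain ⟨t, ht, hΦt⟩ := hg.2.2.2 (mem_Ici.mpr hs)
  have hmem : t ∈ {t : ℝ | 0 ≤ t ∧ s ≤ Φ t} := ⟨ht, hΦt.ge⟩
  have hle : invF Φ s ≤ t := csInf_le ⟨0, fun u hu => hu.1⟩ hmem
  calc Φ (invF Φ s) ≤ Φ t := hg.2.1 (mem_Ici.mpr (invF_nonneg Φ s)) ht hle
    _ = s := hΦt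

lemma betaIntegrand_contOn {m n : ℝ} :
    ContinuousOn (fun u : ℝ => u ^ (m - 1) / (1 + u) ^ (m + n)) (Ioi 0) := by
  apply ContinuousOn.div
  · exact continuousOn_id.rpow_const fun u hu => Or.inl (ne_of_gt hu)
  · refine (continuousOn_const.add continuousOn_id).rpow_const fun u hu => Or.inl ?_
    have := mem_Ioi.mp hu
    show (1:ℝ) + u ≠ 0
    intro h; linarith
  · intro u hu
    have : (0:ℝ) < 1 + u := by have := mem_Ioi.mp hu; linarith
    exact ne_of_gt (Real.rpow_pos_of_pos this _)

lemma betaIntegrand_integrableOn {m n : ℝ} (hm : 0 < m) (hn : 0 < n) :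
    IntegrableOn (fun u : ℝ => u ^ (m - 1) / (1 + u) ^ (m + n)) (Ioi 0) := by
  have hmn : (0:ℝ) ≤ m + n := by linarith
  have h1 : IntegrableOn (fun u : ℝ => u ^ (m - 1) / (1 + u) ^ (m + n)) (Ioc 0 1) := by
    have hg : IntegrableOn (fun u : ℝ => u ^ (m - 1)) (Ioc 0 1) := by
      rw [← intervalIntegrable_iff_integrableOn_Ioc_of_le zero_le_one]
      exact intervalIntegral.intervalIntegrable_rpow' (by linarith)
    refine hg.mono' ((betaIntegrand_contOn.mono Ioc_subset_Ioi_self).aestronglyMeasurable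
      measurableSet_Ioc) ?_
    filter_upwards [ae_restrict_mem measurableSet_Ioc] with u hu
    have hu0 : (0:ℝ) < u := hu.1
    have h1u : (1:ℝ) ≤ 1 + u := by linarith
    have hb : (1:ℝ) ≤ (1 + u) ^ (m + n) := by
      calc (1:ℝ) = 1 ^ (m + n) := (Real.one_rpow _).symm
        _ ≤ (1 + u) ^ (m + n) := Real.rpow_le_rpow zero_le_one h1u hmn
    rw [Real.norm_of_nonneg (by positivity)]
    exact div_le_self (Real.rpow_nonneg hu0.le _) hb
  have h2 : IntegrableOn (fun u : ℝ => u ^ (m - 1) / (1 + u) ^ (m + n)) (Ioi 1) := by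
    have hg : IntegrableOn (fun u : ℝ => u ^ (-1 - n)) (Ioi 1) :=
      integrableOn_Ioi_rpow_of_lt (by linarith) one_pos
    refine hg.mono' (((betaIntegrand_contOn (m := m) (n := n)).mono fun u (hu : u ∈ Ioi (1:ℝ)) =>
      mem_Ioi.mpr (lt_trans one_pos hu)).aestronglyMeasurable measurableSet_Ioi) ?_
    filter_upwards [ae_restrict_mem measurableSet_Ioi] with u hu
    have hu1 : (1:ℝ) < u := hu
    have hu0 : (0:ℝ) < u := lt_trans one_pos hu1
    have hb : u ^ (m + n) ≤ (1 + u) ^ (m + n) :=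
      Real.rpow_le_rpow hu0.le (by linarith) hmn
    rw [Real.norm_of_nonneg (by positivity)]
    calc u ^ (m - 1) / (1 + u) ^ (m + n) ≤ u ^ (m - 1) / u ^ (m + n) :=
          div_le_div_of_nonneg_left (Real.rpow_nonneg hu0.le _) (Real.rpow_pos_of_pos hu0 _) hb
      _ = u ^ (-1 - n) := by
          rw [← Real.rpow_sub hu0]; ring_nf
  have := h1.union h2
  rwa [Ioc_union_Ioi_eq_Ioi zero_le_one] at this

lemma betaFn_nonneg {m n : ℝ} : 0 ≤ betaFn m n := by
  apply setIntegral_nonneg measurableSet_Ioi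
  intro u hu
  have : (0:ℝ) < u := hu
  positivity

lemma lintegral_betaFn {m n : ℝ} (hm : 0 < m) (hn : 0 < n) :
    ∫⁻ u in Ioi (0:ℝ), ENNReal.ofReal (u ^ (m - 1) / (1 + u) ^ (m + n))
      = ENNReal.ofReal (betaFn m n) := by
  rw [betaFn, ofReal_integral_eq_lintegral_ofReal (betaIntegrand_integrableOn hm hn)]
  filter_upwards [ae_restrict_mem measurableSet_Ioi] with u hu
  have : (0:ℝ) < u := hu
  positivity

lemma lintegral_one_add_sq_rpow (p : ℝ) :
    ∫⁻ t : ℝ, ENNReal.ofReal ((1 + t ^ 2) ^ (-p))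
      = ∫⁻ u in Ioi (0:ℝ), ENNReal.ofReal (u ^ ((1:ℝ)/2 - 1) * (1 + u) ^ (-p)) := by
  have h0 : ∫⁻ t : ℝ, ENNReal.ofReal ((1 + t ^ 2) ^ (-p))
      = ∫⁻ t in Iio (0:ℝ) ∪ Ioi 0, ENNReal.ofReal ((1 + t ^ 2) ^ (-p)) := by
    rw [← setLIntegral_univ]
    apply setLIntegral_congr
    rw [Iio_union_Ioi]
    symm
    rw [ae_eq_univ, compl_compl]
    exact measure_singleton 0
  have hneg : ∫⁻ t in Iio (0:ℝ), ENNReal.ofReal ((1 + t ^ 2) ^ (-p))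
      = ∫⁻ t in Ioi (0:ℝ), ENNReal.ofReal ((1 + t ^ 2) ^ (-p)) := by
    have himg : Neg.neg '' Ioi (0:ℝ) = Iio 0 := by
      rw [Set.image_neg_eq_neg, Set.neg_Ioi, neg_zero]
    have key := lintegral_image_eq_lintegral_abs_deriv_mul' (f := Neg.neg)
      (f' := fun _ => (-1:ℝ)) (s := Ioi (0:ℝ)) measurableSet_Ioi
      (fun x _ => (hasDerivAt_neg x).hasDerivWithinAt) neg_injective.injOn
      (fun t => ENNReal.ofReal ((1 + t ^ 2) ^ (-p)))
    rw [himg] at key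
    rw [key]
    simp [neg_sq]
  have hsq : ∫⁻ t in Ioi (0:ℝ), ENNReal.ofReal ((1 + t ^ 2) ^ (-p))
      = ∫⁻ u in Ioi (0:ℝ),
          ENNReal.ofReal (1 / (2 * Real.sqrt u)) * ENNReal.ofReal ((1 + u) ^ (-p)) := by
    have himg : Real.sqrt '' Ioi (0:ℝ) = Ioi 0 := by
      apply Subset.antisymm
      · rintro y ⟨u, hu, rfl⟩
        exact Real.sqrt_pos.mpr hu
      · intro y hy
        exact ⟨y ^ 2, mem_Ioi.mpr (pow_pos hy 2), Real.sqrt_sq (le_of_lt hy)⟩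
    have key := lintegral_image_eq_lintegral_abs_deriv_mul'
      (f' := fun u => 1 / (2 * Real.sqrt u)) (s := Ioi (0:ℝ)) measurableSet_Ioi
      (fun x hx => (Real.hasDerivAt_sqrt (ne_of_gt hx)).hasDerivWithinAt)
      (fun u hu v hv h => by
        have h2 := congrArg (· ^ 2) h
        simpa [Real.sq_sqrt (le_of_lt hu), Real.sq_sqrt (le_of_lt hv)] using h2)
      (fun t => ENNReal.ofReal ((1 + t ^ 2) ^ (-p)))
    rw [himg] at key
    rw [key]
    apply setLIntegral_congr_fun measurableSet_Ioi
    intro u hu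
    dsimp only
    have hu0 : (0:ℝ) < u := hu
    rw [Real.sq_sqrt (le_of_lt hu0), _root_.abs_of_nonneg (by positivity)]
  rw [h0, lintegral_union measurableSet_Ioi
    (by rw [Set.disjoint_left]; intro a ha hb; exact absurd (lt_trans ha hb) (lt_irrefl a)),
    hneg, hsq, ← lintegral_add_left (by fun_prop)]
  apply setLIntegral_congr_fun measurableSet_Ioi
  intro u hu
  dsimp only
  have hu0 : (0:ℝ) < u := hu
  have hs0 : (0:ℝ) < Real.sqrt u := Real.sqrt_pos.mpr hu0
  have ha : 1 / (2 * Real.sqrt u) + 1 / (2 * Real.sqrt u) = u ^ ((1:ℝ)/2 - 1) := by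
    rw [show ((1:ℝ)/2 - 1) = -(1/2) by ring, Real.rpow_neg hu0.le, ← Real.sqrt_eq_rpow]
    rw [← add_div]
    rw [eq_comm, inv_eq_iff_eq_inv, eq_comm, inv_eq_one_div]
    field_simp
    ring
  rw [← add_mul, ← ENNReal.ofReal_add (by positivity) (by positivity), ha,
    ← ENNReal.ofReal_mul (by positivity)]

lemma lintegral_translate_scale (a b p : ℝ) (hb : 0 < b) :
    ∫⁻ x : ℝ, ENNReal.ofReal (((x - a) ^ 2 + b ^ 2) ^ (-p))
      = ENNReal.ofReal (b ^ (1 - 2 * p)) * ∫⁻ t : ℝ, ENNReal.ofReal ((1 + t ^ 2) ^ (-p)) := by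
  have himg : (fun t : ℝ => a + b * t) '' univ = univ := by
    apply eq_univ_of_forall
    intro x
    exact ⟨(x - a) / b, trivial, by field_simp; ring⟩
  have key := lintegral_image_eq_lintegral_abs_deriv_mul' (f := fun t => a + b * t)
    (f' := fun _ => b) (s := univ) MeasurableSet.univ
    (fun t _ => (((hasDerivAt_id t).const_mul b).const_add a).hasDerivWithinAt.congr_deriv
      (mul_one b))
    (fun u _ v _ h => by
      have h' : a + b * u = a + b * v := h
      have : b * u = b * v := by linarith
      exact mul_left_cancel₀ (ne_of_gt hb) this)
    (fun x => ENNReal.ofReal (((x - a) ^ 2 + b ^ 2) ^ (-p)))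
  rw [himg, setLIntegral_univ, setLIntegral_univ] at key
  rw [key, ← lintegral_const_mul' _ _ ENNReal.ofReal_ne_top]
  apply lintegral_congr
  intro t
  rw [← ENNReal.ofReal_mul (by positivity)]
  congr 1
  have h1 : (a + b * t - a) ^ 2 + b ^ 2 = b ^ 2 * (1 + t ^ 2) := by ring
  rw [_root_.abs_of_nonneg hb.le, h1, Real.mul_rpow (sq_nonneg b) (by positivity)]
  have h2 : (b ^ 2 : ℝ) ^ (-p) = b ^ (2 * (-p)) := by
    rw [← Real.rpow_natCast b 2, ← Real.rpow_mul hb.le]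
    norm_num
  have h4 : b * b ^ (2 * (-p)) = b ^ (1 - 2 * p) := by
    rw [show (1 - 2 * p : ℝ) = 1 + 2 * (-p) by ring, Real.rpow_add hb, Real.rpow_one]
  rw [h2, ← mul_assoc, h4, ENNReal.ofReal_mul (by positivity)]

lemma lintegral_scale_Ioi (y α q : ℝ) (hy : 0 < y) :
    ∫⁻ v in Ioi (0:ℝ), ENNReal.ofReal (v ^ α * (v + y) ^ (-q))
      = ENNReal.ofReal (y ^ (α + 1 - q)) *
        ∫⁻ u in Ioi (0:ℝ), ENNReal.ofReal (u ^ α * (1 + u) ^ (-q)) := by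
  have himg : (fun u : ℝ => y * u) '' Ioi 0 = Ioi 0 := by
    apply Subset.antisymm
    · rintro v ⟨u, hu, rfl⟩
      exact mul_pos hy hu
    · intro v hv
      exact ⟨v / y, div_pos hv hy, by field_simp⟩
  have key := lintegral_image_eq_lintegral_abs_deriv_mul' (f := fun u => y * u)
    (f' := fun _ => y) (s := Ioi (0:ℝ)) measurableSet_Ioi
    (fun u _ => ((hasDerivAt_id u).const_mul y).hasDerivWithinAt.congr_deriv (mul_one y))
    (fun u _ v _ h => mul_left_cancel₀ (ne_of_gt hy) h)
    (fun v => ENNReal.ofReal (v ^ α * (v + y) ^ (-q)))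
  rw [himg] at key
  rw [key, ← lintegral_const_mul' _ _ ENNReal.ofReal_ne_top]
  apply setLIntegral_congr_fun measurableSet_Ioi
  intro u hu
  dsimp only
  have hu0 : (0:ℝ) < u := hu
  rw [_root_.abs_of_nonneg hy.le, ← ENNReal.ofReal_mul hy.le,
    ← ENNReal.ofReal_mul (by positivity)]
  congr 1
  have h1 : y * u + y = y * (1 + u) := by ring
  rw [h1, Real.mul_rpow hy.le hu0.le, Real.mul_rpow hy.le (by positivity)]
  have h3 : y * (y ^ α * u ^ α * (y ^ (-q) * (1 + u) ^ (-q)))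
      = (y * y ^ α * y ^ (-q)) * (u ^ α * (1 + u) ^ (-q)) := by ring
  have h4 : y * y ^ α * y ^ (-q) = y ^ (α + 1 - q) := by
    rw [show (α + 1 - q : ℝ) = (1 + α) + (-q) by ring, Real.rpow_add hy,
      Real.rpow_add hy, Real.rpow_one]
  rw [h3, h4]

lemma esymm_re (x v : ℝ) : (Complex.measurableEquivRealProd.symm (x, v)).re = x := by
  simp [Complex.measurableEquivRealProd]

lemma esymm_im (x v : ℝ) : (Complex.measurableEquivRealProd.symm (x, v)).im = v := by
  simp [Complex.measurableEquivRealProd]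

lemma measurableSet_UHP : MeasurableSet UHP :=
  measurableSet_lt measurable_const Complex.measurable_im

lemma lintegral_UHP (G : ℂ → ℝ≥0∞) (hG : Measurable G) :
    ∫⁻ w in UHP, G w
      = ∫⁻ v in Ioi (0:ℝ), ∫⁻ x : ℝ, G (Complex.measurableEquivRealProd.symm (x, v)) := by
  have mp : MeasurePreserving (Complex.measurableEquivRealProd.symm)
      (volume : Measure (ℝ × ℝ)) (volume : Measure ℂ) :=
    Complex.volume_preserving_equiv_real_prod.symm
  have hemb : MeasurableEmbedding (Complex.measurableEquivRealProd.symm : ℝ × ℝ → ℂ) :=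
    Complex.measurableEquivRealProd.symm.measurableEmbedding
  have key := mp.setLIntegral_comp_preimage_emb hemb G UHP
  have hpre : (Complex.measurableEquivRealProd.symm) ⁻¹' UHP = univ ×ˢ Ioi (0:ℝ) := by
    ext p
    simp only [mem_preimage, Set.mem_prod, mem_univ, true_and, mem_Ioi]
    rfl
  rw [hpre] at key
  rw [← key, Measure.volume_eq_prod, ← Measure.prod_restrict, Measure.restrict_univ]
  exact lintegral_prod_symm _ ((hG.comp hemb.measurable).aemeasurable)

end Aux

/-- The test function `f_z(w) = Φ⁻¹(1/y^{2+α}) y^{4+2α} / (w - z̄)^{4+2α}` lies in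
`A_α^Φ(ℂ₊)`, uniformly in `z`. -/
theorem bergman_test_function
    (Φ : ℝ → ℝ) (α : ℝ) (hα : -1 < α)
    (hg : IsGrowth Φ) (hc : ConvexOn ℝ (Ici 0) Φ)
    (z : ℂ) (hz : z ∈ UHP) :
    DifferentiableOn ℂ
        (fun w => (((invF Φ (1 / z.im ^ ((2 : ℝ) + α)) * z.im ^ ((4 : ℝ) + 2 * α) : ℝ) : ℂ)) /
          (w - (starRingEnd ℂ) z) ^ ((((4 : ℝ) + 2 * α : ℝ)) : ℂ))
        UHP ∧
      ∫⁻ w, ENNReal.ofReal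
          (Φ ‖
            ((((invF Φ (1 / z.im ^ ((2 : ℝ) + α)) * z.im ^ ((4 : ℝ) + 2 * α) : ℝ) : ℂ)) /
              (w - (starRingEnd ℂ) z) ^ ((((4 : ℝ) + 2 * α : ℝ)) : ℂ))‖) ∂(bergMeasure α)
        ≤ ENNReal.ofReal (betaFn (1 / 2) ((3 + 2 * α) / 2) * betaFn (1 + α) (2 + α)) := by
  have hy : 0 < z.im := hz
  constructor
  · -- differentiability
    intro w hw
    have him : (w - (starRingEnd ℂ) z).im = w.im + z.im := by
      simp [Complex.sub_im, Complex.conj_im]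
    have himpos : 0 < (w - (starRingEnd ℂ) z).im := by
      rw [him]; exact add_pos hw hz
    have hslit : (w - (starRingEnd ℂ) z) ∈ Complex.slitPlane :=
      Complex.mem_slitPlane_iff.mpr (Or.inr (ne_of_gt himpos))
    have hne : (w - (starRingEnd ℂ) z) ^ ((((4 : ℝ) + 2 * α : ℝ)) : ℂ) ≠ 0 := by
      intro h
      rcases (Complex.cpow_eq_zero_iff _ _).mp h with ⟨h0, -⟩
      rw [h0] at himpos
      simp at himpos
    exact ((differentiableAt_const _).div
      (((differentiableAt_id.sub (differentiableAt_const _)).cpow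
        (differentiableAt_const _) hslit)) hne).differentiableWithinAt
  · -- integral estimate
    set c := invF Φ (1 / z.im ^ ((2 : ℝ) + α)) with hcdef
    have hc0 : 0 ≤ c := invF_nonneg Φ _
    have hsy : 0 < 1 / z.im ^ ((2:ℝ) + α) := by positivity
    have hΦc : Φ c ≤ 1 / z.im ^ ((2:ℝ) + α) := phi_invF_le hg hsy.le
    have hΦc0 : 0 ≤ Φ c := hg.2.2.1 (mem_Ici.mpr hc0)
    have hyb0 : (0:ℝ) ≤ z.im ^ ((4:ℝ) + 2 * α) := Real.rpow_nonneg hy.le _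
    have hB1 : (0:ℝ) ≤ betaFn (1/2) ((3 + 2*α)/2) := betaFn_nonneg
    have hB2 : (0:ℝ) ≤ betaFn (1+α) (2+α) := betaFn_nonneg
    have hK : ∫⁻ t : ℝ, ENNReal.ofReal ((1 + t^2) ^ (-((2:ℝ)+α)))
        = ENNReal.ofReal (betaFn (1/2) ((3 + 2*α)/2)) := by
      rw [lintegral_one_add_sq_rpow ((2:ℝ)+α),
        ← lintegral_betaFn (m := 1/2) (n := (3+2*α)/2) (by norm_num) (by linarith)]
      apply setLIntegral_congr_fun measurableSet_Ioi
      intro u hu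
      dsimp only
      have hu0 : (0:ℝ) < u := hu
      congr 1
      rw [show ((1:ℝ)/2 + (3+2*α)/2) = 2 + α by ring,
        Real.rpow_neg (by linarith : (0:ℝ) ≤ 1 + u), ← div_eq_mul_inv]
    have hL : ∫⁻ u in Ioi (0:ℝ), ENNReal.ofReal (u ^ α * (1 + u) ^ (-((3:ℝ)+2*α)))
        = ENNReal.ofReal (betaFn (1+α) (2+α)) := by
      rw [← lintegral_betaFn (m := 1+α) (n := 2+α) (by linarith) (by linarith)]
      apply setLIntegral_congr_fun measurableSet_Ioi
      intro u hu
      dsimp only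
      have hu0 : (0:ℝ) < u := hu
      congr 1
      rw [show ((1:ℝ)+α-1) = α by ring, show (((1:ℝ)+α)+(2+α)) = 3+2*α by ring,
        Real.rpow_neg (by linarith : (0:ℝ) ≤ 1 + u), ← div_eq_mul_inv]
    set G : ℂ → ℝ≥0∞ := fun w => ENNReal.ofReal (w.im ^ α) *
      ENNReal.ofReal ((z.im ^ ((4:ℝ) + 2 * α) *
        ((w.re - z.re) ^ 2 + (w.im + z.im) ^ 2) ^ (-((2:ℝ) + α))) * Φ c) with hGdef
    rw [bergMeasure, lintegral_withDensity_eq_lintegral_mul_non_measurable _ (by fun_prop)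
      (ae_of_all _ fun w => ENNReal.ofReal_lt_top)]
    have hstep1 : ∫⁻ w in UHP, ((fun w : ℂ => ENNReal.ofReal (w.im ^ α)) *
        fun w => ENNReal.ofReal
          (Φ ‖((((c * z.im ^ ((4 : ℝ) + 2 * α) : ℝ) : ℂ)) /
            (w - (starRingEnd ℂ) z) ^ ((((4 : ℝ) + 2 * α : ℝ)) : ℂ))‖)) w
        ≤ ∫⁻ w in UHP, G w := by
      apply lintegral_mono_ae
      filter_upwards [ae_restrict_mem measurableSet_UHP] with w hw
      simp only [Pi.mul_apply]
      have hw' : 0 < w.im := hw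
      have hwz : (0:ℝ) < w.im + z.im := by linarith
      have hSpos : (0:ℝ) < (w.re - z.re) ^ 2 + (w.im + z.im) ^ 2 := by positivity
      -- compute the modulus
      have him : (w - (starRingEnd ℂ) z).im = w.im + z.im := by
        simp [Complex.sub_im, Complex.conj_im]
      have hre : (w - (starRingEnd ℂ) z).re = w.re - z.re := by
        simp [Complex.sub_re, Complex.conj_re]
      have hC0 : (0:ℝ) ≤ c * z.im ^ ((4:ℝ) + 2 * α) := by positivity
      have habs : ‖(((c * z.im ^ ((4 : ℝ) + 2 * α) : ℝ) : ℂ)) /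
            (w - (starRingEnd ℂ) z) ^ ((((4 : ℝ) + 2 * α : ℝ)) : ℂ)‖
          = c * z.im ^ ((4:ℝ) + 2 * α) *
            ((w.re - z.re) ^ 2 + (w.im + z.im) ^ 2) ^ (-((2:ℝ) + α)) := by
        rw [norm_div, Complex.norm_real, Real.norm_eq_abs, _root_.abs_of_nonneg hC0, Complex.norm_cpow_real,
          Complex.norm_def, Complex.normSq_apply, hre, him]
        have hrw : (w.re - z.re) * (w.re - z.re) + (w.im + z.im) * (w.im + z.im)
            = (w.re - z.re) ^ 2 + (w.im + z.im) ^ 2 := by ring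
        rw [hrw, Real.sqrt_eq_rpow, ← Real.rpow_mul hSpos.le,
          show (1:ℝ)/2 * (4 + 2*α) = 2 + α by ring, Real.rpow_neg hSpos.le, div_eq_mul_inv]
      rw [habs, hGdef]
      apply mul_le_mul_right
      apply ENNReal.ofReal_le_ofReal
      -- convexity estimate
      set S := (w.re - z.re) ^ 2 + (w.im + z.im) ^ 2 with hSdef
      set t := z.im ^ ((4:ℝ) + 2 * α) * S ^ (-((2:ℝ) + α)) with htdef
      have ht0 : 0 ≤ t := by positivity
      have hyS : z.im ^ 2 ≤ S := by nlinarith [sq_nonneg (w.re - z.re)]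
      have hpow : ((z.im ^ 2 : ℝ)) ^ ((2:ℝ) + α) = z.im ^ ((4:ℝ) + 2 * α) := by
        rw [← Real.rpow_natCast z.im 2, ← Real.rpow_mul hy.le]
        congr 1
        push_cast
        ring
      have ht1 : t ≤ 1 := by
        rw [htdef, Real.rpow_neg hSpos.le, ← div_eq_mul_inv,
          div_le_one (Real.rpow_pos_of_pos hSpos _), ← hpow]
        exact Real.rpow_le_rpow (sq_nonneg _) hyS (by linarith)
      have hconv := hc.2 (mem_Ici.mpr hc0) (mem_Ici.mpr (le_refl (0:ℝ))) ht0
        (by linarith : (0:ℝ) ≤ 1 - t) (by ring)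
      simp only [smul_eq_mul, mul_zero, add_zero, growth_zero hg] at hconv
      calc Φ (c * z.im ^ ((4:ℝ) + 2 * α) * S ^ (-((2:ℝ) + α)))
          = Φ (t * c) := by rw [htdef]; ring_nf
        _ ≤ t * Φ c := hconv
    refine le_trans hstep1 ?_
    -- compute the remaining integral
    rw [lintegral_UHP G (by rw [hGdef]; fun_prop)]
    have hinner : ∀ v ∈ Ioi (0:ℝ),
        (∫⁻ x : ℝ, G (Complex.measurableEquivRealProd.symm (x, v)))
          = ENNReal.ofReal (Φ c * z.im ^ ((4:ℝ) + 2 * α) * betaFn (1/2) ((3 + 2*α)/2))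
            * ENNReal.ofReal (v ^ α * (v + z.im) ^ (-((3:ℝ) + 2 * α))) := by
      intro v hv
      have hv0 : (0:ℝ) < v := hv
      have hb : (0:ℝ) < v + z.im := by linarith
      have hpt : ∀ x : ℝ, G (Complex.measurableEquivRealProd.symm (x, v))
          = ENNReal.ofReal (v ^ α * z.im ^ ((4:ℝ) + 2 * α) * Φ c)
            * ENNReal.ofReal (((x - z.re) ^ 2 + (v + z.im) ^ 2) ^ (-((2:ℝ) + α))) := by
        intro x
        rw [hGdef]
        simp only [esymm_re, esymm_im]
        rw [← ENNReal.ofReal_mul (Real.rpow_nonneg hv0.le α),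
          ← ENNReal.ofReal_mul (by positivity :
            (0:ℝ) ≤ v ^ α * z.im ^ ((4:ℝ) + 2 * α) * Φ c)]
        congr 1
        ring
      rw [lintegral_congr hpt, lintegral_const_mul' _ _ ENNReal.ofReal_ne_top,
        lintegral_translate_scale z.re (v + z.im) ((2:ℝ)+α) hb, hK,
        show (1 - 2*((2:ℝ)+α)) = -((3:ℝ)+2*α) by ring]
      rw [← ENNReal.ofReal_mul (Real.rpow_nonneg hb.le _),
        ← ENNReal.ofReal_mul (by positivity :
          (0:ℝ) ≤ v ^ α * z.im ^ ((4:ℝ) + 2 * α) * Φ c),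
        ← ENNReal.ofReal_mul (by positivity :
          (0:ℝ) ≤ Φ c * z.im ^ ((4:ℝ) + 2 * α) * betaFn (1/2) ((3 + 2*α)/2))]
      congr 1
      ring
    rw [setLIntegral_congr_fun measurableSet_Ioi
        (by intro v hv; exact hinner v hv),
      lintegral_const_mul' _ _ ENNReal.ofReal_ne_top,
      lintegral_scale_Ioi z.im α ((3:ℝ) + 2 * α) hy, hL,
      ← ENNReal.ofReal_mul (Real.rpow_nonneg hy.le _),
      ← ENNReal.ofReal_mul (by positivity :
        (0:ℝ) ≤ Φ c * z.im ^ ((4:ℝ) + 2 * α) * betaFn (1/2) ((3 + 2*α)/2))]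
    apply ENNReal.ofReal_le_ofReal
    have hexp : z.im ^ ((4:ℝ) + 2 * α) * z.im ^ (α + 1 - ((3:ℝ) + 2 * α))
        = z.im ^ ((2:ℝ) + α) := by
      rw [← Real.rpow_add hy]
      congr 1
      ring
    have hΦy : Φ c * z.im ^ ((2:ℝ) + α) ≤ 1 := by
      have hyp : (0:ℝ) < z.im ^ ((2:ℝ) + α) := Real.rpow_pos_of_pos hy _
      calc Φ c * z.im ^ ((2:ℝ) + α) ≤ (1 / z.im ^ ((2:ℝ) + α)) * z.im ^ ((2:ℝ) + α) :=
            mul_le_mul_of_nonneg_right hΦc hyp.le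
        _ = 1 := by field_simp
    calc Φ c * z.im ^ ((4:ℝ) + 2 * α) * betaFn (1/2) ((3 + 2*α)/2) *
          (z.im ^ (α + 1 - ((3:ℝ) + 2 * α)) * betaFn (1+α) (2+α))
        = (Φ c * (z.im ^ ((4:ℝ) + 2 * α) * z.im ^ (α + 1 - ((3:ℝ) + 2 * α)))) *
            (betaFn (1/2) ((3 + 2*α)/2) * betaFn (1+α) (2+α)) := by ring
      _ = (Φ c * z.im ^ ((2:ℝ) + α)) *
            (betaFn (1/2) ((3 + 2*α)/2) * betaFn (1+α) (2+α)) := by rw [hexp]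
      _ ≤ 1 * (betaFn (1/2) ((3 + 2*α)/2) * betaFn (1+α) (2+α)) :=
            mul_le_mul_of_nonneg_right hΦy (by positivity)
      _ = betaFn (1/2) ((3 + 2*α)/2) * betaFn (1+α) (2+α) := one_mul _
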